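/- arXiv:1905.08515 — 3 statements merged into one kernel-verified Lean document; each statement's English description precedes it below -/
import Mathlib

section
/- Let d ≥ 1, let E be a nonempty finite index set, let S ≥ 1 and M > 0 be reals, and for each e ∈ E let ψ_e : ℝ^d → ℝ be measurable with |ψ_e(x)| ≤ M for all x and ψ_e(x) = 0 for x ∉ [0,S]^d. For j ∈ ℕ, k ∈ ℤ^d, e ∈ E define ψ_{j,k,e}(x) := 2^{jd/2} ψ_e(2^j x − k). Let A, B ≥ 0 and let (c_{j,k,e})_{j ∈ ℕ, k ∈ ℤ^d, e ∈ E} be real coefficients, finitely many nonzero at each level j, satisfying for every j ∈ ℕ: sup_{k,e} |c_{j,k,e}| ≤ 2^{−jd/2} A and Σ_{k,e} |c_{j,k,e}| ≤ 2^{j(d/2 − 1)} B. Then for every q with 2 ≤ q ≤ 3 there exists a constant C > 0, depending only on d, q, S, M and #E, such that for all natural numbers J < J': ‖ Σ_{j = J+1}^{J'} Σ_{k ∈ ℤ^d} Σ_{e ∈ E} c_{j,k,e} ψ_{j,k,e} ‖_{L^q(ℝ^d)} ≤ C · 2^{−J/q} · A^{1 − 1/q} · B^{1/q}. -/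
/-!
At a fixed level `j`, at most `(S+1)^d #E` of the atoms `ψ_{j,k,e}` are nonzero at any given
point, and each is bounded by `2^{jd/2} M`; with `|c_{j,k,e}| ≤ 2^{-jd/2} A` this bounds the
level `f_j = Σ_{k,e} c_{j,k,e} ψ_{j,k,e}` pointwise by `(S+1)^d #E M A`. Each atom is
supported in a box of volume `(S 2^{-j})^d`, so
`‖f_j‖₁ ≤ 2^{jd/2} M (S 2^{-j})^d Σ|c_{j,k,e}| ≤ M S^d B 2^{-j}`.
Interpolating, `‖f_j‖_q ≤ ‖f_j‖_∞^{1-1/q} ‖f_j‖₁^{1/q} ≲ 2^{-j/q} A^{1-1/q} B^{1/q}`, and the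
triangle inequality and the geometric series in `2^{-1/q}` sum the levels `J < j ≤ J'`.
-/

open MeasureTheory Finset
open scoped ENNReal

lemma Int.card_Icc_ceil_floor_le {α : Type*} [Field α] [LinearOrder α] [IsStrictOrderedRing α]
    [FloorRing α] {a b : α} (h : a ≤ b + 1) : (#(Icc ⌈a⌉ ⌊b⌋) : α) ≤ b - a + 1 := by
  have hcast : (#(Icc ⌈a⌉ ⌊b⌋) : α) = max ((⌊b⌋ + 1 - ⌈a⌉ : ℤ) : α) 0 := by
    rw [Int.card_Icc, ← Int.cast_natCast, Int.toNat_eq_max]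
    push_cast
    rfl
  rw [hcast]
  refine max_le ?_ (by linarith)
  push_cast
  linarith [Int.floor_le b, Int.le_ceil a]

lemma Pi.card_Icc_ceil_sub_floor_le {d : ℕ} (y : Fin d → ℝ) {S : ℝ} (hS : 0 ≤ S) :
    (#(Icc (fun i => ⌈y i - S⌉) (fun i => ⌊y i⌋)) : ℝ) ≤ (S + 1) ^ d := by
  rw [Pi.card_Icc]
  push_cast
  calc ∏ i, (#(Icc ⌈y i - S⌉ ⌊y i⌋) : ℝ) ≤ ∏ _i : Fin d, (S + 1) :=
        prod_le_prod (fun _ _ => by positivity)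
          (fun i _ => (Int.card_Icc_ceil_floor_le (by linarith)).trans_eq (by ring))
    _ = (S + 1) ^ d := by simp

lemma eLpNorm_le_of_norm_le_of_lintegral_le {α F : Type*} [MeasurableSpace α] {μ : Measure α}
    [NormedAddCommGroup F] {f : α → F} {q a b : ℝ} (hq : 1 ≤ q) (ha : 0 ≤ a) (hb : 0 ≤ b)
    (hsup : ∀ x, ‖f x‖ ≤ a) (hint : ∫⁻ x, ‖f x‖ₑ ∂μ ≤ ENNReal.ofReal b) :
    eLpNorm f (ENNReal.ofReal q) μ ≤ ENNReal.ofReal (a ^ (1 - 1 / q) * b ^ (1 / q)) := by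
  have hq0 : 0 < q := by linarith
  have hpow : ∀ x, ‖f x‖ₑ ^ q ≤ ENNReal.ofReal (a ^ (q - 1)) * ‖f x‖ₑ := fun x => by
    rw [← ofReal_norm, ENNReal.ofReal_rpow_of_nonneg (norm_nonneg _) hq0.le,
      ← ENNReal.ofReal_mul (by positivity)]
    refine ENNReal.ofReal_le_ofReal ?_
    calc ‖f x‖ ^ q = ‖f x‖ ^ (q - 1) * ‖f x‖ ^ (1 : ℝ) := by
          rw [← Real.rpow_add' (norm_nonneg _) (by simp [hq0.ne'])]
          ring_nf
      _ ≤ a ^ (q - 1) * ‖f x‖ := by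
          rw [Real.rpow_one]
          gcongr
          exact hsup x
  rw [eLpNorm_eq_lintegral_rpow_enorm_toReal (by simpa using hq0) ENNReal.ofReal_ne_top,
    ENNReal.toReal_ofReal hq0.le]
  calc (∫⁻ x, ‖f x‖ₑ ^ q ∂μ) ^ (1 / q)
      ≤ (ENNReal.ofReal (a ^ (q - 1)) * ENNReal.ofReal b) ^ (1 / q) := by
        gcongr
        calc ∫⁻ x, ‖f x‖ₑ ^ q ∂μ ≤ ∫⁻ x, ENNReal.ofReal (a ^ (q - 1)) * ‖f x‖ₑ ∂μ :=
              lintegral_mono hpow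
          _ = ENNReal.ofReal (a ^ (q - 1)) * ∫⁻ x, ‖f x‖ₑ ∂μ :=
              lintegral_const_mul' _ _ ENNReal.ofReal_ne_top
          _ ≤ _ := by gcongr
    _ = ENNReal.ofReal (a ^ (1 - 1 / q) * b ^ (1 / q)) := by
        rw [← ENNReal.ofReal_mul (by positivity),
          ENNReal.ofReal_rpow_of_nonneg (by positivity) (by positivity),
          Real.mul_rpow (by positivity) hb, ← Real.rpow_mul ha]
        congr 3
        field_simp

lemma sum_Ioc_two_rpow_neg_div_le {q : ℝ} (hq : 0 < q) (J J' : ℕ) :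
    ∑ j ∈ Ioc J J', (2 : ℝ) ^ (-(j : ℝ) / q) ≤ 2 ^ (-(J : ℝ) / q) / (1 - 2 ^ (-1 / q)) := by
  have hpow : ∀ n : ℕ, (2 : ℝ) ^ (-(n : ℝ) / q) = ((2 : ℝ) ^ (-1 / q)) ^ n := fun n => by
    rw [← Real.rpow_natCast, ← Real.rpow_mul zero_le_two]
    ring_nf
  have hr : (2 : ℝ) ^ (-1 / q) < 1 :=
    Real.rpow_lt_one_of_one_lt_of_neg one_lt_two (div_neg_of_neg_of_pos (by norm_num) hq)
  simp only [hpow]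
  calc ∑ j ∈ Ioc J J', ((2 : ℝ) ^ (-1 / q)) ^ j
      ≤ ∑ j ∈ Ico J (J' + 1), ((2 : ℝ) ^ (-1 / q)) ^ j :=
        sum_le_sum_of_subset_of_nonneg (fun j hj => by simp at hj ⊢; omega)
          (fun _ _ _ => by positivity)
    _ ≤ _ := geom_sum_Ico_le_of_lt_one (by positivity) hr

section Wavelet

variable {d : ℕ} {E : Type*}

/-- `waveletAtom ψ j (k, e)` is the paper's `ψ_{j,k,e}`. -/
noncomputable def waveletAtom (ψ : E → (Fin d → ℝ) → ℝ) (j : ℕ) (p : (Fin d → ℤ) × E)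
    (x : Fin d → ℝ) : ℝ :=
  (2 : ℝ) ^ ((j : ℝ) * d / 2) * ψ p.2 (fun i => 2 ^ j * x i - p.1 i)

noncomputable def waveletLevel (ψ : E → (Fin d → ℝ) → ℝ) (j : ℕ) (c : ((Fin d → ℤ) × E) →₀ ℝ)
    (x : Fin d → ℝ) : ℝ :=
  ∑ p ∈ c.support, c p * waveletAtom ψ j p x

variable {ψ : E → (Fin d → ℝ) → ℝ} {S M : ℝ} {j : ℕ}

lemma measurable_waveletAtom (hmeas : ∀ e, Measurable (ψ e)) (p : (Fin d → ℤ) × E) :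
    Measurable (waveletAtom ψ j p) := by
  unfold waveletAtom
  fun_prop

lemma abs_waveletAtom_le (hbd : ∀ e x, |ψ e x| ≤ M) (p : (Fin d → ℤ) × E) (x : Fin d → ℝ) :
    |waveletAtom ψ j p x| ≤ 2 ^ ((j : ℝ) * d / 2) * M := by
  rw [waveletAtom, abs_mul, abs_of_pos (by positivity)]
  exact mul_le_mul_of_nonneg_left (hbd _ _) (by positivity)

section Support

variable (hsupp : ∀ e x, x ∉ Set.Icc (0 : Fin d → ℝ) (fun _ => S) → ψ e x = 0)
  {p : (Fin d → ℤ) × E} {x : Fin d → ℝ}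
include hsupp

lemma sub_mem_Icc_of_waveletAtom_ne_zero (h : waveletAtom ψ j p x ≠ 0) (i : Fin d) :
    2 ^ j * x i - p.1 i ∈ Set.Icc 0 S := by
  by_contra hx
  refine h ?_
  rw [waveletAtom, hsupp _ _ fun hmem => hx ⟨hmem.1 i, hmem.2 i⟩, mul_zero]

lemma waveletAtom_eq_zero_of_notMem_Icc
    (h : x ∉ Set.Icc (fun i => (p.1 i : ℝ) / 2 ^ j) (fun i => (p.1 i + S) / 2 ^ j)) :
    waveletAtom ψ j p x = 0 := by
  by_contra h0
  have h2j : (0 : ℝ) < 2 ^ j := by positivity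
  refine h ⟨fun i => ?_, fun i => ?_⟩
  all_goals have := sub_mem_Icc_of_waveletAtom_ne_zero hsupp h0 i
  · rw [div_le_iff₀' h2j]
    linarith [this.1]
  · rw [le_div_iff₀' h2j]
    linarith [this.2]

lemma waveletAtom_eq_zero_of_notMem_Icc_ceil_floor
    (h : p.1 ∉ Icc (fun i => ⌈2 ^ j * x i - S⌉) (fun i => ⌊2 ^ j * x i⌋)) :
    waveletAtom ψ j p x = 0 := by
  by_contra h0
  refine h (mem_Icc.2 ⟨fun i => Int.ceil_le.2 ?_, fun i => Int.le_floor.2 ?_⟩)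
  all_goals have := sub_mem_Icc_of_waveletAtom_ne_zero hsupp h0 i
  · linarith [this.2]
  · linarith [this.1]

end Support

variable {c : ((Fin d → ℤ) × E) →₀ ℝ}

lemma abs_waveletLevel_le [Fintype E] {A : ℝ} (hS : 0 ≤ S) (hM : 0 ≤ M) (hA : 0 ≤ A)
    (hbd : ∀ e x, |ψ e x| ≤ M)
    (hsupp : ∀ e x, x ∉ Set.Icc (0 : Fin d → ℝ) (fun _ => S) → ψ e x = 0)
    (hc : ∀ p, |c p| ≤ (2 : ℝ) ^ (-((j : ℝ) * d) / 2) * A) (x : Fin d → ℝ) :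
    |waveletLevel ψ j c x| ≤ (S + 1) ^ d * Fintype.card E * M * A := by
  classical
  set T := Icc (fun i => ⌈2 ^ j * x i - S⌉) (fun i => ⌊2 ^ j * x i⌋) ×ˢ (univ : Finset E)
  have hterm : ∀ p, |c p * waveletAtom ψ j p x| ≤ A * M := fun p => by
    have hscale : (2 : ℝ) ^ (-((j : ℝ) * d) / 2) * 2 ^ ((j : ℝ) * d / 2) = 1 := by
      rw [← Real.rpow_add two_pos, neg_div, neg_add_cancel, Real.rpow_zero]
    calc |c p * waveletAtom ψ j p x|
        ≤ (2 ^ (-((j : ℝ) * d) / 2) * A) * (2 ^ ((j : ℝ) * d / 2) * M) := by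
          rw [abs_mul]
          exact mul_le_mul (hc p) (abs_waveletAtom_le hbd p x) (abs_nonneg _) (by positivity)
      _ = A * M := by linear_combination A * M * hscale
  have hvanish : ∀ p ∈ c.support, p ∉ c.support ∩ T → |c p * waveletAtom ψ j p x| = 0 :=
    fun p hp hpT => by
      rw [waveletAtom_eq_zero_of_notMem_Icc_ceil_floor hsupp fun h => hpT <|
        mem_inter.2 ⟨hp, mem_product.2 ⟨h, mem_univ _⟩⟩, mul_zero, abs_zero]
  have hcard : (#T : ℝ) ≤ (S + 1) ^ d * Fintype.card E := by
    rw [card_product, card_univ, Nat.cast_mul]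
    gcongr
    exact Pi.card_Icc_ceil_sub_floor_le _ hS
  calc |waveletLevel ψ j c x| ≤ ∑ p ∈ c.support, |c p * waveletAtom ψ j p x| :=
        abs_sum_le_sum_abs _ _
    _ = ∑ p ∈ c.support ∩ T, |c p * waveletAtom ψ j p x| :=
        (sum_subset inter_subset_left hvanish).symm
    _ ≤ ∑ p ∈ T, |c p * waveletAtom ψ j p x| :=
        sum_le_sum_of_subset_of_nonneg inter_subset_right fun _ _ _ => abs_nonneg _
    _ ≤ #T * (A * M) := by simpa using sum_le_card_nsmul T _ _ fun p _ => hterm p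
    _ ≤ (S + 1) ^ d * Fintype.card E * (A * M) := by gcongr
    _ = (S + 1) ^ d * Fintype.card E * M * A := by ring

lemma lintegral_enorm_waveletAtom_le (hS : 0 ≤ S) (hbd : ∀ e x, |ψ e x| ≤ M)
    (hsupp : ∀ e x, x ∉ Set.Icc (0 : Fin d → ℝ) (fun _ => S) → ψ e x = 0)
    (p : (Fin d → ℤ) × E) :
    ∫⁻ x, ‖waveletAtom ψ j p x‖ₑ ≤
      ENNReal.ofReal (2 ^ ((j : ℝ) * d / 2) * M * (S / 2 ^ j) ^ d) := by
  set box := Set.Icc (fun i => (p.1 i : ℝ) / 2 ^ j) (fun i => (p.1 i + S) / 2 ^ j)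
  have hind : ∀ x, ‖waveletAtom ψ j p x‖ₑ ≤
      box.indicator (fun _ => ENNReal.ofReal (2 ^ ((j : ℝ) * d / 2) * M)) x := fun x => by
    by_cases hx : x ∈ box
    · rw [Set.indicator_of_mem hx, Real.enorm_eq_ofReal_abs]
      exact ENNReal.ofReal_le_ofReal (abs_waveletAtom_le hbd p x)
    · rw [waveletAtom_eq_zero_of_notMem_Icc hsupp hx, enorm_zero]
      exact bot_le
  have hvol : volume box = ENNReal.ofReal ((S / 2 ^ j) ^ d) := by
    have hside : ∀ i, (p.1 i + S) / 2 ^ j - p.1 i / 2 ^ j = S / 2 ^ j := fun i => by ring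
    rw [Real.volume_Icc_pi]
    simp only [hside, prod_const, card_univ, Fintype.card_fin]
    exact (ENNReal.ofReal_pow (by positivity) d).symm
  calc ∫⁻ x, ‖waveletAtom ψ j p x‖ₑ
      ≤ ∫⁻ x, box.indicator (fun _ => ENNReal.ofReal (2 ^ ((j : ℝ) * d / 2) * M)) x :=
        lintegral_mono hind
    _ = ENNReal.ofReal (2 ^ ((j : ℝ) * d / 2) * M * (S / 2 ^ j) ^ d) := by
        rw [lintegral_indicator_const measurableSet_Icc, hvol,
          ← ENNReal.ofReal_mul' (by positivity)]

lemma lintegral_enorm_waveletLevel_le {B : ℝ} (hS : 0 ≤ S) (hM : 0 ≤ M)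
    (hmeas : ∀ e, Measurable (ψ e)) (hbd : ∀ e x, |ψ e x| ≤ M)
    (hsupp : ∀ e x, x ∉ Set.Icc (0 : Fin d → ℝ) (fun _ => S) → ψ e x = 0)
    (hc : ∑ p ∈ c.support, |c p| ≤ (2 : ℝ) ^ ((j : ℝ) * ((d : ℝ) / 2 - 1)) * B) :
    ∫⁻ x, ‖waveletLevel ψ j c x‖ₑ ≤ ENNReal.ofReal (M * S ^ d * B * 2 ^ (-(j : ℝ))) := by
  have hscale : (2 : ℝ) ^ ((j : ℝ) * ((d : ℝ) / 2 - 1)) *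
      (2 ^ ((j : ℝ) * d / 2) * M * (S / 2 ^ j) ^ d) = M * S ^ d * 2 ^ (-(j : ℝ)) := by
    have h2 : (2 : ℝ) ^ ((j : ℝ) * ((d : ℝ) / 2 - 1)) * 2 ^ ((j : ℝ) * d / 2)
        = 2 ^ (-(j : ℝ)) * (2 ^ j) ^ d := by
      rw [← Real.rpow_add two_pos, ← pow_mul, ← Real.rpow_natCast, ← Real.rpow_add two_pos]
      push_cast
      ring_nf
    calc _ = (2 : ℝ) ^ ((j : ℝ) * ((d : ℝ) / 2 - 1)) * 2 ^ ((j : ℝ) * d / 2) * M * S ^ d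
          / (2 ^ j) ^ d := by ring
      _ = M * S ^ d * 2 ^ (-(j : ℝ)) := by
          rw [h2]
          field_simp
  set I := 2 ^ ((j : ℝ) * d / 2) * M * (S / 2 ^ j) ^ d
  have hmeas_term : ∀ p, Measurable fun x => ‖waveletAtom ψ j p x‖ₑ :=
    fun p => (measurable_waveletAtom hmeas p).enorm
  calc ∫⁻ x, ‖waveletLevel ψ j c x‖ₑ
      ≤ ∫⁻ x, ∑ p ∈ c.support, ‖c p‖ₑ * ‖waveletAtom ψ j p x‖ₑ :=
        lintegral_mono fun x => (enorm_sum_le _ _).trans_eq (by simp only [enorm_mul])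
    _ = ∑ p ∈ c.support, ‖c p‖ₑ * ∫⁻ x, ‖waveletAtom ψ j p x‖ₑ := by
        rw [lintegral_finsetSum _ fun p _ => (hmeas_term p).const_mul _]
        exact sum_congr rfl fun p _ => lintegral_const_mul _ (hmeas_term p)
    _ ≤ ∑ p ∈ c.support, ‖c p‖ₑ * ENNReal.ofReal I := by
        gcongr with p
        exact lintegral_enorm_waveletAtom_le hS hbd hsupp p
    _ = ENNReal.ofReal ((∑ p ∈ c.support, |c p|) * I) := by
        rw [sum_mul, ENNReal.ofReal_sum_of_nonneg fun _ _ => by positivity]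
        simp only [Real.enorm_eq_ofReal_abs, ENNReal.ofReal_mul (abs_nonneg _)]
    _ ≤ ENNReal.ofReal (M * S ^ d * B * 2 ^ (-(j : ℝ))) := by
        refine ENNReal.ofReal_le_ofReal
          ((mul_le_mul_of_nonneg_right hc (by positivity)).trans_eq ?_)
        linear_combination B * hscale

lemma measurable_waveletLevel (hmeas : ∀ e, Measurable (ψ e)) :
    Measurable (waveletLevel ψ j c) :=
  Finset.measurable_sum _ fun p _ => (measurable_waveletAtom hmeas p).const_mul _

lemma eLpNorm_waveletLevel_le [Fintype E] {A B q : ℝ} (hq : 1 ≤ q) (hS : 0 ≤ S) (hM : 0 ≤ M)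
    (hA : 0 ≤ A) (hB : 0 ≤ B) (hmeas : ∀ e, Measurable (ψ e)) (hbd : ∀ e x, |ψ e x| ≤ M)
    (hsupp : ∀ e x, x ∉ Set.Icc (0 : Fin d → ℝ) (fun _ => S) → ψ e x = 0)
    (hcsup : ∀ p, |c p| ≤ (2 : ℝ) ^ (-((j : ℝ) * d) / 2) * A)
    (hcl1 : ∑ p ∈ c.support, |c p| ≤ (2 : ℝ) ^ ((j : ℝ) * ((d : ℝ) / 2 - 1)) * B) :
    eLpNorm (waveletLevel ψ j c) (ENNReal.ofReal q) volume ≤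
      ENNReal.ofReal (((S + 1) ^ d * Fintype.card E * M) ^ (1 - 1 / q) * (M * S ^ d) ^ (1 / q)
        * 2 ^ (-(j : ℝ) / q) * A ^ (1 - 1 / q) * B ^ (1 / q)) := by
  refine (eLpNorm_le_of_norm_le_of_lintegral_le hq (by positivity) (by positivity)
    (abs_waveletLevel_le hS hM hA hbd hsupp hcsup)
    (lintegral_enorm_waveletLevel_le hS hM hmeas hbd hsupp hcl1)).trans_eq ?_
  have hsup : ((S + 1) ^ d * Fintype.card E * M * A) ^ (1 - 1 / q)
      = ((S + 1) ^ d * Fintype.card E * M) ^ (1 - 1 / q) * A ^ (1 - 1 / q) :=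
    Real.mul_rpow (by positivity) hA
  have hint : (M * S ^ d * B * 2 ^ (-(j : ℝ))) ^ (1 / q)
      = (M * S ^ d) ^ (1 / q) * B ^ (1 / q) * 2 ^ (-(j : ℝ) / q) := by
    rw [Real.mul_rpow (by positivity) (by positivity), Real.mul_rpow (by positivity) hB,
      ← Real.rpow_mul zero_le_two, neg_mul, one_div, ← div_eq_mul_inv, neg_div]
  rw [hsup, hint]
  ring_nf

end Wavelet

theorem wavelet_high_frequency_tail_bound_general
    (d : ℕ) {E : Type*} [Fintype E] [Nonempty E]
    (S M : ℝ) (hS : 1 ≤ S) (hM : 0 < M)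
    (ψ : E → (Fin d → ℝ) → ℝ)
    (hmeas : ∀ e, Measurable (ψ e))
    (hbd : ∀ e x, |ψ e x| ≤ M)
    (hsupp : ∀ e x, x ∉ Set.Icc (0 : Fin d → ℝ) (fun _ => S) → ψ e x = 0)
    (A B : ℝ) (hA : 0 ≤ A) (hB : 0 ≤ B)
    (c : ℕ → ((Fin d → ℤ) × E) →₀ ℝ)
    (hcsup : ∀ (j : ℕ) (p : (Fin d → ℤ) × E), |c j p| ≤ (2 : ℝ) ^ (-((j : ℝ) * d) / 2) * A)
    (hcl1 : ∀ j : ℕ, ∑ p ∈ (c j).support, |c j p| ≤ (2 : ℝ) ^ ((j : ℝ) * ((d : ℝ) / 2 - 1)) * B)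
    (q : ℝ) (hq2 : 2 ≤ q) :
    ∃ C > 0, ∀ J J' : ℕ, J < J' →
      eLpNorm
        (fun x : Fin d → ℝ =>
          ∑ j ∈ Finset.Ioc J J', ∑ p ∈ (c j).support,
            c j p * ((2 : ℝ) ^ ((j : ℝ) * d / 2) * ψ p.2 (fun i => 2 ^ j * x i - p.1 i)))
        (ENNReal.ofReal q) volume
      ≤ ENNReal.ofReal
          (C * (2 : ℝ) ^ (-(J : ℝ) / q) * A ^ (1 - 1 / q) * B ^ (1 / q)) := by
  have hq : 1 ≤ q := by linarith
  set D := ((S + 1) ^ d * Fintype.card E * M) ^ (1 - 1 / q) * (M * S ^ d) ^ (1 / q)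
  have hr : (2 : ℝ) ^ (-1 / q) < 1 :=
    Real.rpow_lt_one_of_one_lt_of_neg one_lt_two
      (div_neg_of_neg_of_pos (by norm_num) (by positivity))
  refine ⟨D / (1 - 2 ^ (-1 / q)), div_pos (by positivity) (sub_pos.2 hr), fun J J' _ => ?_⟩
  change eLpNorm (fun x => ∑ j ∈ Ioc J J', waveletLevel ψ j (c j) x) _ _ ≤ _
  calc _ ≤ ∑ j ∈ Ioc J J', eLpNorm (waveletLevel ψ j (c j)) (ENNReal.ofReal q) volume := by
        simpa only [← Finset.sum_apply] using eLpNorm_sum_le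
          (fun j _ => (measurable_waveletLevel hmeas).aestronglyMeasurable)
          (ENNReal.one_le_ofReal.2 hq)
    _ ≤ ∑ j ∈ Ioc J J',
          ENNReal.ofReal (D * 2 ^ (-(j : ℝ) / q) * A ^ (1 - 1 / q) * B ^ (1 / q)) :=
        sum_le_sum fun j _ => eLpNorm_waveletLevel_le hq (by linarith) hM.le hA hB hmeas hbd
          hsupp (hcsup j) (hcl1 j)
    _ ≤ ENNReal.ofReal
          (D / (1 - 2 ^ (-1 / q)) * 2 ^ (-(J : ℝ) / q) * A ^ (1 - 1 / q) * B ^ (1 / q)) := by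
        rw [← ENNReal.ofReal_sum_of_nonneg fun _ _ => by positivity, ← sum_mul, ← sum_mul,
          ← mul_sum, div_mul_eq_mul_div, mul_div_assoc]
        gcongr
        exact sum_Ioc_two_rpow_neg_div_le (by positivity) J J'

/-- High-frequency tail estimate (from the proof of Proposition 8 of the paper): if the
coefficients at each level `j` satisfy `sup |c_{j,k,e}| ≤ 2^{-jd/2} A` and
`Σ |c_{j,k,e}| ≤ 2^{j(d/2-1)} B`, then for `2 ≤ q ≤ 3` there is `C > 0` (depending only
on `d, q, S, M, #E`) such that for all `J < J'`,
`‖Σ_{j=J+1}^{J'} Σ_{k,e} c_{j,k,e} ψ_{j,k,e}‖_{L^q} ≤ C 2^{-J/q} A^{1-1/q} B^{1/q}`. -/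
theorem wavelet_high_frequency_tail_bound
    (d : ℕ) (hd : 1 ≤ d) {E : Type*} [Fintype E] [Nonempty E]
    (S M : ℝ) (hS : 1 ≤ S) (hM : 0 < M)
    (ψ : E → (Fin d → ℝ) → ℝ)
    (hmeas : ∀ e, Measurable (ψ e))
    (hbd : ∀ e x, |ψ e x| ≤ M)
    (hsupp : ∀ e x, x ∉ Set.Icc (0 : Fin d → ℝ) (fun _ => S) → ψ e x = 0)
    (A B : ℝ) (hA : 0 ≤ A) (hB : 0 ≤ B)
    (c : ℕ → ((Fin d → ℤ) × E) →₀ ℝ)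
    (hcsup : ∀ (j : ℕ) (p : (Fin d → ℤ) × E), |c j p| ≤ (2 : ℝ) ^ (-((j : ℝ) * d) / 2) * A)
    (hcl1 : ∀ j : ℕ, ∑ p ∈ (c j).support, |c j p| ≤ (2 : ℝ) ^ ((j : ℝ) * ((d : ℝ) / 2 - 1)) * B)
    (q : ℝ) (hq2 : 2 ≤ q) (hq3 : q ≤ 3) :
    ∃ C > 0, ∀ J J' : ℕ, J < J' →
      eLpNorm
        (fun x : Fin d → ℝ =>
          ∑ j ∈ Finset.Ioc J J', ∑ p ∈ (c j).support,
            c j p * ((2 : ℝ) ^ ((j : ℝ) * d / 2) * ψ p.2 (fun i => 2 ^ j * x i - p.1 i)))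
        (ENNReal.ofReal q) volume
      ≤ ENNReal.ofReal
          (C * (2 : ℝ) ^ (-(J : ℝ) / q) * A ^ (1 - 1 / q) * B ^ (1 / q)) :=
  wavelet_high_frequency_tail_bound_general d S M hS hM ψ hmeas hbd hsupp A B hA hB c hcsup hcl1 q
    hq2
end

section
/- Let d ≥ 1, β ≥ 0 and 0 < a₁ ≤ a₂. Let 𝓕 denote the Fourier transform on ℝ^d with convention 𝓕g(ξ) = ∫_{ℝ^d} g(x) e^{−2πi x·ξ} dx, extended unitarily to L²(ℝ^d). Let K ∈ L¹(ℝ^d) satisfy a₁ (1 + |ξ|²)^{−β/2} ≤ |𝓕K(ξ)| ≤ a₂ (1 + |ξ|²)^{−β/2} for all ξ ∈ ℝ^d, and let ψ ∈ L²(ℝ^d) satisfy ∫_{ℝ^d} (1 + |ξ|²)^β |𝓕ψ(ξ)|² dξ < ∞. Fix j ∈ ℕ and k ∈ ℤ^d and define v : ℝ^d → ℂ by v(ξ) := 2^{−jd/2 − jβ} e^{−2πi ξ·(2^{−j}k)} 𝓕ψ(2^{−j}ξ) / 𝓕K(−ξ). Then v ∈ L²(ℝ^d) and a₂^{−2} ∫_{ℝ^d}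 |ξ|^{2β} |𝓕ψ(ξ)|² dξ ≤ ∫_{ℝ^d} |v(ξ)|² dξ ≤ a₁^{−2} ∫_{ℝ^d} (1 + |ξ|²)^β |𝓕ψ(ξ)|² dξ. -/
/-!
With `r = 2^{-j}`, the phase has modulus one and
`|v(ξ)|² = r^{d+2β} |w(rξ)|² / |𝓕K(-ξ)|²`, which the hypotheses on `𝓕K` squeeze between
`a₂⁻²` and `a₁⁻²` times `r^{d+2β} (1+|ξ|²)^β |w(rξ)|²`. The substitution `η = rξ` turns the
integral of the latter into `∫ (r² + |η|²)^β |w(η)|² dη`, and `|η|² ≤ r² + |η|² ≤ 1 + |η|²`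
since `0 < r ≤ 1`.
-/

open MeasureTheory Complex
open scoped FourierTransform Real ENNReal ComplexConjugate

open Module

section Weights

variable {E : Type*} [NormedAddCommGroup E] [MeasurableSpace E] [OpensMeasurableSpace E]
  {μ : Measure E}

theorem integrable_add_sq_rpow_mul_of_le {β s t : ℝ} (hβ : 0 ≤ β) (hs : 0 ≤ s) (hst : s ≤ t)
    {g : E → ℝ} (hg : AEStronglyMeasurable g μ)
    (h : Integrable (fun η ↦ (t + ‖η‖ ^ 2) ^ β * g η) μ) :
    Integrable (fun η ↦ (s + ‖η‖ ^ 2) ^ β * g η) μ := by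
  refine h.mono ((by fun_prop : Measurable fun η : E ↦ (s + ‖η‖ ^ 2) ^ β)
    |>.aestronglyMeasurable.mul hg) (ae_of_all _ fun η ↦ ?_)
  simp only [norm_mul, Real.norm_of_nonneg (Real.rpow_nonneg (by positivity : 0 ≤ s + ‖η‖ ^ 2) β),
    Real.norm_of_nonneg (Real.rpow_nonneg (by linarith [sq_nonneg ‖η‖] : 0 ≤ t + ‖η‖ ^ 2) β)]
  gcongr

theorem integral_add_sq_rpow_mul_mono {β s t : ℝ} (hβ : 0 ≤ β) (hs : 0 ≤ s) (hst : s ≤ t)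
    {g : E → ℝ} (hg : AEStronglyMeasurable g μ) (hg0 : 0 ≤ g)
    (h : Integrable (fun η ↦ (t + ‖η‖ ^ 2) ^ β * g η) μ) :
    ∫ η, (s + ‖η‖ ^ 2) ^ β * g η ∂μ ≤ ∫ η, (t + ‖η‖ ^ 2) ^ β * g η ∂μ :=
  integral_mono (integrable_add_sq_rpow_mul_of_le hβ hs hst hg h) h fun η ↦ by
    have := hg0 η
    gcongr

end Weights

section Dilation

theorem sq_add_norm_smul_sq_rpow {E : Type*} [NormedAddCommGroup E] [NormedSpace ℝ E] (β : ℝ)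
    {r : ℝ} (hr : 0 < r) (ξ : E) :
    (r ^ 2 + ‖r • ξ‖ ^ 2) ^ β = r ^ (2 * β) * (1 + ‖ξ‖ ^ 2) ^ β := by
  rw [norm_smul, Real.norm_of_nonneg hr.le, Real.rpow_mul hr.le, ← Real.mul_rpow (by positivity)
    (by positivity), Real.rpow_two]
  ring_nf

variable {E : Type*} [NormedAddCommGroup E] [NormedSpace ℝ E] [FiniteDimensional ℝ E]
  [MeasurableSpace E] [BorelSpace E] {μ : Measure E} [μ.IsAddHaarMeasure]

theorem integrable_one_add_sq_rpow_mul_comp_smul_iff (β : ℝ) {r : ℝ} (hr : 0 < r) (g : E → ℝ) :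
    Integrable (fun ξ ↦ (1 + ‖ξ‖ ^ 2) ^ β * g (r • ξ)) μ ↔
      Integrable (fun η ↦ (r ^ 2 + ‖η‖ ^ 2) ^ β * g η) μ := by
  rw [← integrable_comp_smul_iff μ (fun η ↦ (r ^ 2 + ‖η‖ ^ 2) ^ β * g η) hr.ne']
  simp_rw [sq_add_norm_smul_sq_rpow β hr, mul_assoc]
  exact (integrable_const_mul_iff (Real.rpow_pos_of_pos hr _).ne'.isUnit _).symm

theorem rpow_mul_integral_one_add_sq_rpow_mul_comp_smul (β : ℝ) {r : ℝ} (hr : 0 < r)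
    (g : E → ℝ) :
    r ^ (finrank ℝ E + 2 * β) * ∫ ξ, (1 + ‖ξ‖ ^ 2) ^ β * g (r • ξ) ∂μ =
      ∫ η, (r ^ 2 + ‖η‖ ^ 2) ^ β * g η ∂μ := by
  have h := Measure.integral_comp_smul_of_nonneg μ (fun η ↦ (r ^ 2 + ‖η‖ ^ 2) ^ β * g η) r
    (hR := hr.le)
  simp_rw [sq_add_norm_smul_sq_rpow β hr, mul_assoc, integral_const_mul, smul_eq_mul] at h
  rw [Real.rpow_add hr, Real.rpow_natCast, mul_assoc, h, ← mul_assoc,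
    mul_inv_cancel₀ (pow_pos hr _).ne', one_mul]

variable {β r : ℝ} {g : E → ℝ}

theorem integrable_rpow_mul_one_add_sq_rpow_mul_comp_smul (hβ : 0 ≤ β) (hr : 0 < r)
    (hr1 : r ≤ 1) (hg : AEStronglyMeasurable g μ)
    (h : Integrable (fun η ↦ (1 + ‖η‖ ^ 2) ^ β * g η) μ) :
    Integrable (fun ξ ↦ r ^ (finrank ℝ E + 2 * β) * ((1 + ‖ξ‖ ^ 2) ^ β * g (r • ξ))) μ :=
  ((integrable_one_add_sq_rpow_mul_comp_smul_iff β hr g).2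
    (integrable_add_sq_rpow_mul_of_le hβ (sq_nonneg r) (pow_le_one₀ hr.le hr1) hg h)).const_mul _

theorem integral_norm_rpow_mul_le_integral_rpow_mul_one_add_sq_rpow_mul_comp_smul
    (hβ : 0 ≤ β) (hr : 0 < r) (hr1 : r ≤ 1) (hg : AEStronglyMeasurable g μ) (hg0 : 0 ≤ g)
    (h : Integrable (fun η ↦ (1 + ‖η‖ ^ 2) ^ β * g η) μ) :
    ∫ η, ‖η‖ ^ (2 * β) * g η ∂μ ≤
      ∫ ξ, r ^ (finrank ℝ E + 2 * β) * ((1 + ‖ξ‖ ^ 2) ^ β * g (r • ξ)) ∂μ := by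
  have hnorm (η : E) : ‖η‖ ^ (2 * β) = (0 + ‖η‖ ^ 2) ^ β := by
    rw [zero_add, ← Real.rpow_natCast, ← Real.rpow_mul (norm_nonneg η), Nat.cast_two]
  simp_rw [integral_const_mul, rpow_mul_integral_one_add_sq_rpow_mul_comp_smul β hr, hnorm]
  exact integral_add_sq_rpow_mul_mono hβ le_rfl (sq_nonneg r) hg hg0
    (integrable_add_sq_rpow_mul_of_le hβ (sq_nonneg r) (pow_le_one₀ hr.le hr1) hg h)

theorem integral_rpow_mul_one_add_sq_rpow_mul_comp_smul_le (hβ : 0 ≤ β) (hr : 0 < r)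
    (hr1 : r ≤ 1) (hg : AEStronglyMeasurable g μ) (hg0 : 0 ≤ g)
    (h : Integrable (fun η ↦ (1 + ‖η‖ ^ 2) ^ β * g η) μ) :
    ∫ ξ, r ^ (finrank ℝ E + 2 * β) * ((1 + ‖ξ‖ ^ 2) ^ β * g (r • ξ)) ∂μ ≤
      ∫ η, (1 + ‖η‖ ^ 2) ^ β * g η ∂μ := by
  rw [integral_const_mul, rpow_mul_integral_one_add_sq_rpow_mul_comp_smul β hr]
  exact integral_add_sq_rpow_mul_mono hβ (sq_nonneg r) (pow_le_one₀ hr.le hr1) hg hg0 h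

end Dilation

section Multiplier

theorem inv_sq_mul_rpow_neg_half (a : ℝ) {q : ℝ} (hq : 0 < q) (β : ℝ) :
    ((a * q ^ (-β / 2)) ^ 2)⁻¹ = a ^ (-2 : ℤ) * q ^ β := by
  rw [mul_pow, ← Real.rpow_natCast (q ^ _), ← Real.rpow_mul hq.le, mul_inv, zpow_neg,
    ← Real.rpow_neg hq.le]
  norm_num

variable {a β m q : ℝ}

theorem inv_sq_le_of_mul_rpow_neg_half_le (ha : 0 < a) (hq : 0 < q)
    (h : a * q ^ (-β / 2) ≤ m) : (m ^ 2)⁻¹ ≤ a ^ (-2 : ℤ) * q ^ β := by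
  rw [← inv_sq_mul_rpow_neg_half a hq β]
  exact inv_anti₀ (by positivity) (pow_le_pow_left₀ (by positivity) h 2)

theorem le_inv_sq_of_le_mul_rpow_neg_half (hm : 0 < m) (hq : 0 < q)
    (h : m ≤ a * q ^ (-β / 2)) : a ^ (-2 : ℤ) * q ^ β ≤ (m ^ 2)⁻¹ := by
  rw [← inv_sq_mul_rpow_neg_half a hq β]
  exact inv_anti₀ (by positivity) (pow_le_pow_left₀ hm.le h 2)

theorem norm_sq_ofReal_mul_exp_mul_div (c t : ℝ) (z m : ℂ) :
    ‖(c : ℂ) * exp (-2 * π * I * t) * z / m‖ ^ 2 = c ^ 2 * ((‖m‖ ^ 2)⁻¹ * ‖z‖ ^ 2) := by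
  have hphase : -2 * (π : ℂ) * I * t = ((-2 * π * t : ℝ) : ℂ) * I := by push_cast; ring
  rw [hphase, norm_div, norm_mul, norm_mul, norm_exp_ofReal_mul_I, Complex.norm_real,
    Real.norm_eq_abs, div_pow, mul_pow, mul_pow, sq_abs]
  ring

theorem norm_sq_ofReal_mul_exp_mul_div_bounds {a₁ a₂ c t : ℝ} {z m : ℂ} (ha₁ : 0 < a₁)
    (hq : 0 < q) (hlow : a₁ * q ^ (-β / 2) ≤ ‖m‖) (hup : ‖m‖ ≤ a₂ * q ^ (-β / 2)) :
    a₂ ^ (-2 : ℤ) * (c ^ 2 * (q ^ β * ‖z‖ ^ 2)) ≤ ‖(c : ℂ) * exp (-2 * π * I * t) * z / m‖ ^ 2 ∧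
      ‖(c : ℂ) * exp (-2 * π * I * t) * z / m‖ ^ 2 ≤ a₁ ^ (-2 : ℤ) * (c ^ 2 * (q ^ β * ‖z‖ ^ 2)) := by
  have hm : 0 < ‖m‖ := lt_of_lt_of_le (by positivity) hlow
  have hinv_low := le_inv_sq_of_le_mul_rpow_neg_half hm hq hup
  have hinv_up := inv_sq_le_of_mul_rpow_neg_half_le ha₁ hq hlow
  rw [norm_sq_ofReal_mul_exp_mul_div]
  constructor
  · calc _ = c ^ 2 * (a₂ ^ (-2 : ℤ) * q ^ β * ‖z‖ ^ 2) := by ring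
      _ ≤ _ := by gcongr
  · calc _ ≤ c ^ 2 * (a₁ ^ (-2 : ℤ) * q ^ β * ‖z‖ ^ 2) := by gcongr
      _ = _ := by ring

end Multiplier

theorem vaguelette_L2_norm_bounds_general
    (d : ℕ) (β : ℝ) (hβ : 0 ≤ β)
    (a₁ a₂ : ℝ) (ha₁ : 0 < a₁)
    (K : EuclideanSpace ℝ (Fin d) → ℂ) (hK : Integrable K)
    (hKlow : ∀ ξ : EuclideanSpace ℝ (Fin d),
      a₁ * (1 + ‖ξ‖ ^ 2) ^ (-β / 2) ≤ ‖𝓕 K ξ‖)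
    (hKup : ∀ ξ : EuclideanSpace ℝ (Fin d),
      ‖𝓕 K ξ‖ ≤ a₂ * (1 + ‖ξ‖ ^ 2) ^ (-β / 2))
    (w : EuclideanSpace ℝ (Fin d) → ℂ) (hw : MemLp w 2 volume)
    (hSobolev : Integrable
      (fun ξ : EuclideanSpace ℝ (Fin d) => (1 + ‖ξ‖ ^ 2) ^ β * ‖w ξ‖ ^ 2))
    (j : ℕ) (k : Fin d → ℤ)
    (v : EuclideanSpace ℝ (Fin d) → ℂ)
    (hv : ∀ ξ : EuclideanSpace ℝ (Fin d),
      v ξ = ((2 : ℝ) ^ (-((j : ℝ) * d / 2) - (j : ℝ) * β) : ℝ) *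
        Complex.exp (-2 * Real.pi * Complex.I *
          ((2 : ℝ) ^ (-(j : ℝ)) * ∑ i, ξ i * (k i : ℝ) : ℝ)) *
        w ((2 : ℝ) ^ (-(j : ℝ)) • ξ) / 𝓕 K (-ξ)) :
    MemLp v 2 volume ∧
    a₂ ^ (-2 : ℤ) * ∫ ξ : EuclideanSpace ℝ (Fin d), ‖ξ‖ ^ (2 * β) * ‖w ξ‖ ^ 2
        ≤ ∫ ξ : EuclideanSpace ℝ (Fin d), ‖v ξ‖ ^ 2 ∧
      (∫ ξ : EuclideanSpace ℝ (Fin d), ‖v ξ‖ ^ 2)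
        ≤ a₁ ^ (-2 : ℤ) *
            ∫ ξ : EuclideanSpace ℝ (Fin d), (1 + ‖ξ‖ ^ 2) ^ β * ‖w ξ‖ ^ 2 := by
  set r : ℝ := 2 ^ (-(j : ℝ))
  have hr : 0 < r := by positivity
  have hr1 : r ≤ 1 := Real.rpow_le_one_of_one_le_of_nonpos one_le_two (by simp)
  have hc : ((2 : ℝ) ^ (-((j : ℝ) * d / 2) - (j : ℝ) * β)) ^ 2 =
      r ^ (finrank ℝ (EuclideanSpace ℝ (Fin d)) + 2 * β) := by
    rw [finrank_euclideanSpace_fin, ← Real.rpow_natCast, ← Real.rpow_mul zero_le_two,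
      ← Real.rpow_mul zero_le_two]
    ring_nf
  set S := fun ξ : EuclideanSpace ℝ (Fin d) ↦
    r ^ (finrank ℝ (EuclideanSpace ℝ (Fin d)) + 2 * β) * ((1 + ‖ξ‖ ^ 2) ^ β * ‖w (r • ξ)‖ ^ 2)
  have hw2 : AEStronglyMeasurable (fun η ↦ ‖w η‖ ^ 2) := hw.1.norm.pow 2
  have hS : Integrable S :=
    integrable_rpow_mul_one_add_sq_rpow_mul_comp_smul hβ hr hr1 hw2 hSobolev
  have hbounds (ξ) : a₂ ^ (-2 : ℤ) * S ξ ≤ ‖v ξ‖ ^ 2 ∧ ‖v ξ‖ ^ 2 ≤ a₁ ^ (-2 : ℤ) * S ξ := by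
    have hlow := hKlow (-ξ)
    have hup := hKup (-ξ)
    rw [norm_neg] at hlow hup
    simp only [S, hv, ← hc]
    exact norm_sq_ofReal_mul_exp_mul_div_bounds ha₁ (by positivity) hlow hup
  have hv_meas : AEStronglyMeasurable v := by
    have hFK : Continuous (𝓕 K) := VectorFourier.fourierIntegral_continuous
      Real.continuous_fourierChar continuous_inner hK
    have hw_dil : AEStronglyMeasurable (fun ξ ↦ w (r • ξ)) :=
      hw.1.comp_quasiMeasurePreserving (Measure.quasiMeasurePreserving_smul volume hr.ne')
    rw [funext hv]
    exact (AEStronglyMeasurable.mul (by fun_prop) hw_dil).div₀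
      (hFK.comp continuous_neg).aestronglyMeasurable
  have hv2 : Integrable (fun ξ ↦ ‖v ξ‖ ^ 2) :=
    (hS.const_mul _).mono' (hv_meas.norm.pow 2) (ae_of_all _ fun ξ ↦ by
      rw [Real.norm_of_nonneg (by positivity)]; exact (hbounds ξ).2)
  have hw2_nonneg : 0 ≤ fun η ↦ ‖w η‖ ^ 2 := fun η ↦ by positivity
  refine ⟨(memLp_two_iff_integrable_sq_norm hv_meas).2 hv2, ?_, ?_⟩
  · calc _ ≤ a₂ ^ (-2 : ℤ) * ∫ ξ, S ξ := by
          refine mul_le_mul_of_nonneg_left ?_ (by positivity)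
          exact integral_norm_rpow_mul_le_integral_rpow_mul_one_add_sq_rpow_mul_comp_smul hβ hr hr1
            hw2 hw2_nonneg hSobolev
      _ ≤ _ := by
          rw [← integral_const_mul]
          exact integral_mono (hS.const_mul _) hv2 fun ξ ↦ (hbounds ξ).1
  · calc _ ≤ a₁ ^ (-2 : ℤ) * ∫ ξ, S ξ := by
          rw [← integral_const_mul]
          exact integral_mono hv2 (hS.const_mul _) fun ξ ↦ (hbounds ξ).2
      _ ≤ _ := by
          refine mul_le_mul_of_nonneg_left ?_ (by positivity)
          exact integral_rpow_mul_one_add_sq_rpow_mul_comp_smul_le hβ hr hr1 hw2 hw2_nonneg hSobolev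

/-- Proposition 9 of the paper (norm bounds for deconvolution vaguelettes, in Fourier form).
`K ∈ L¹(ℝ^d)` has Fourier transform comparable to `(1+|ξ|²)^{-β/2}`, `ψ ∈ L²(ℝ^d)` has
Fourier–Plancherel transform `w` (characterized by Parseval's relation against `L¹ ∩ L²`
functions) with finite `H^β` integral. Then the Fourier transform
`v(ξ) = 2^{-jd/2-jβ} e^{-2πi ξ·(2^{-j}k)} w(2^{-j}ξ)/𝓕K(-ξ)` of the vaguelette `u_{j,k}`
is in `L²` and `a₂⁻² ∫ |ξ|^{2β} |w(ξ)|² dξ ≤ ∫ |v|² ≤ a₁⁻² ∫ (1+|ξ|²)^β |w(ξ)|² dξ`. -/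
theorem vaguelette_L2_norm_bounds
    (d : ℕ) (hd : 1 ≤ d) (β : ℝ) (hβ : 0 ≤ β)
    (a₁ a₂ : ℝ) (ha₁ : 0 < a₁) (ha₁₂ : a₁ ≤ a₂)
    (K : EuclideanSpace ℝ (Fin d) → ℂ) (hK : Integrable K)
    (hKlow : ∀ ξ : EuclideanSpace ℝ (Fin d),
      a₁ * (1 + ‖ξ‖ ^ 2) ^ (-β / 2) ≤ ‖𝓕 K ξ‖)
    (hKup : ∀ ξ : EuclideanSpace ℝ (Fin d),
      ‖𝓕 K ξ‖ ≤ a₂ * (1 + ‖ξ‖ ^ 2) ^ (-β / 2))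
    (ψ : EuclideanSpace ℝ (Fin d) → ℝ) (hψ : MemLp ψ 2 volume)
    (w : EuclideanSpace ℝ (Fin d) → ℂ) (hw : MemLp w 2 volume)
    -- `w` is the Fourier–Plancherel transform of `ψ`: Parseval's relation holds against
    -- the Fourier transform of every `g ∈ L¹ ∩ L²`.
    (hPlancherel : ∀ g : EuclideanSpace ℝ (Fin d) → ℂ, Integrable g → MemLp g 2 volume →
      ∫ ξ, w ξ * conj (𝓕 g ξ) = ∫ x, (ψ x : ℂ) * conj (g x))
    (hSobolev : Integrable
      (fun ξ : EuclideanSpace ℝ (Fin d) => (1 + ‖ξ‖ ^ 2) ^ β * ‖w ξ‖ ^ 2))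
    (j : ℕ) (k : Fin d → ℤ)
    (v : EuclideanSpace ℝ (Fin d) → ℂ)
    (hv : ∀ ξ : EuclideanSpace ℝ (Fin d),
      v ξ = ((2 : ℝ) ^ (-((j : ℝ) * d / 2) - (j : ℝ) * β) : ℝ) *
        Complex.exp (-2 * Real.pi * Complex.I *
          ((2 : ℝ) ^ (-(j : ℝ)) * ∑ i, ξ i * (k i : ℝ) : ℝ)) *
        w ((2 : ℝ) ^ (-(j : ℝ)) • ξ) / 𝓕 K (-ξ)) :
    MemLp v 2 volume ∧
    a₂ ^ (-2 : ℤ) * ∫ ξ : EuclideanSpace ℝ (Fin d), ‖ξ‖ ^ (2 * β) * ‖w ξ‖ ^ 2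
        ≤ ∫ ξ : EuclideanSpace ℝ (Fin d), ‖v ξ‖ ^ 2 ∧
      (∫ ξ : EuclideanSpace ℝ (Fin d), ‖v ξ‖ ^ 2)
        ≤ a₁ ^ (-2 : ℤ) *
            ∫ ξ : EuclideanSpace ℝ (Fin d), (1 + ‖ξ‖ ^ 2) ^ β * ‖w ξ‖ ^ 2 :=
  vaguelette_L2_norm_bounds_general d β hβ a₁ a₂ ha₁ K hK hKlow hKup w hw hSobolev j k v hv
end

section
/- Let S ≥ 1 and M > 0 be reals and let ψ : ℝ → ℝ be measurable with |ψ(x)| ≤ M for all x, ψ(x) = 0 for x ∉ [0,S], and ∫_ℝ ψ(x) dx = 0. Let g : ℝ → ℝ be a function of bounded variation on ℝ with total variation V, such that g(x) = 0 for x ∉ [0,1]. Then for every j ∈ ℕ: Σ_{k ∈ ℤ} | ∫_ℝ g(x) · 2^{j/2} ψ(2^j x − k) dx | ≤ (S + 1) · S · M · 2^{−j/2} · V. -/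
open MeasureTheory Set
open scoped ENNReal

/-! Because `ψ` has mean zero, the coefficient `⟨g, ψ_{j,k}⟩` does not change when a constant is
subtracted from `g`; subtracting the value of `g` at the left end of the support
`[k 2^{-j}, (k + S) 2^{-j}]` of `ψ_{j,k}` bounds it by `‖ψ_{j,k}‖₁ ≤ 2^{-j/2} S M` times the
variation of `g` on that support. These supports cover every dyadic interval
`[m 2^{-j}, (m + 1) 2^{-j}]` at most `⌈S⌉ ≤ S + 1` times, and the variations of `g` over
consecutive intervals add up to at most `V`. -/

section Variation

variable {f : ℝ → ℝ} {u : ℤ → ℝ}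

lemma eVariationOn_Icc_eq_sum_range (hu : Monotone u) (m : ℤ) (n : ℕ) :
    eVariationOn f (Icc (u m) (u (m + n)))
      = ∑ i ∈ Finset.range n, eVariationOn f (Icc (u (m + i)) (u (m + i + 1))) := by
  induction n with
  | zero => simp
  | succ n ih =>
    have hsplit := eVariationOn.Icc_add_Icc f (s := univ)
      (hu (show m ≤ m + n by omega)) (hu (show m + n ≤ m + n + 1 by omega)) (mem_univ _)
    rw [univ_inter, univ_inter, univ_inter] at hsplit
    rw [Nat.cast_succ, ← add_assoc, ← hsplit, Finset.sum_range_succ, ← ih]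

lemma tsum_eVariationOn_Icc_le (hu : Monotone u) :
    ∑' m : ℤ, eVariationOn f (Icc (u m) (u (m + 1))) ≤ eVariationOn f univ := by
  refine ENNReal.summable.tsum_le_of_sum_le fun s => ?_
  obtain ⟨n, hn⟩ := (s.image Int.natAbs).exists_le
  let shift : ℕ ↪ ℤ := ⟨fun i => i - n, fun i i' h => by simpa using h⟩
  have hs : s ⊆ (Finset.range (2 * n + 1)).map shift := fun i hi => by
    have := hn _ (Finset.mem_image_of_mem _ hi)
    exact Finset.mem_map.2 ⟨(i + n).toNat, Finset.mem_range.2 (by omega),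
      show ((i + n).toNat : ℤ) - n = i by omega⟩
  calc ∑ m ∈ s, eVariationOn f (Icc (u m) (u (m + 1)))
      ≤ ∑ m ∈ (Finset.range (2 * n + 1)).map shift, eVariationOn f (Icc (u m) (u (m + 1))) :=
        Finset.sum_le_sum_of_subset hs
    _ = eVariationOn f (Icc (u (-n)) (u (-n + (2 * n + 1 : ℕ)))) := by
        rw [Finset.sum_map, eVariationOn_Icc_eq_sum_range hu]
        refine Finset.sum_congr rfl fun i _ => ?_
        show eVariationOn f (Icc (u (i - n)) (u (i - n + 1))) = _
        rw [sub_eq_neg_add]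
    _ ≤ eVariationOn f univ := eVariationOn.mono f (subset_univ _)

lemma tsum_eVariationOn_Icc_add_le (hu : Monotone u) (N : ℕ) :
    ∑' k : ℤ, eVariationOn f (Icc (u k) (u (k + N))) ≤ N * eVariationOn f univ := by
  calc ∑' k : ℤ, eVariationOn f (Icc (u k) (u (k + N)))
      = ∑ i ∈ Finset.range N, ∑' k : ℤ, eVariationOn f (Icc (u (k + i)) (u (k + i + 1))) := by
        simp_rw [eVariationOn_Icc_eq_sum_range hu]
        exact Summable.tsum_finsetSum fun _ _ => ENNReal.summable
    _ = ∑ _i ∈ Finset.range N, ∑' k : ℤ, eVariationOn f (Icc (u k) (u (k + 1))) := by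
        refine Finset.sum_congr rfl fun i _ => ?_
        exact (Equiv.addRight (i : ℤ)).tsum_eq fun k => eVariationOn f (Icc (u k) (u (k + 1)))
    _ ≤ ∑ _i ∈ Finset.range N, eVariationOn f univ :=
        Finset.sum_le_sum fun _ _ => tsum_eVariationOn_Icc_le hu
    _ = N * eVariationOn f univ := by rw [Finset.sum_const, Finset.card_range, nsmul_eq_mul]

end Variation

section Integral

variable {f g h : ℝ → ℝ} {a b M : ℝ}

lemma integrable_of_abs_le_of_eq_zero_off_Icc (hf : AEStronglyMeasurable f)
    (hbd : ∀ x, |f x| ≤ M) (hsupp : ∀ x ∉ Icc a b, f x = 0) : Integrable f :=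
  (integrableOn_iff_integrable_of_support_subset (s := Icc a b)
    fun x hx => by_contra fun hx' => hx (hsupp x hx')).1
    (Measure.integrableOn_of_bounded measure_Icc_lt_top.ne hf (.of_forall hbd))

lemma integral_abs_le_of_abs_le_of_eq_zero_off_Icc (hab : a ≤ b) (hbd : ∀ x, |f x| ≤ M)
    (hsupp : ∀ x ∉ Icc a b, f x = 0) : ∫ x, |f x| ≤ (b - a) * M := by
  rw [← setIntegral_eq_integral_of_forall_compl_eq_zero (s := Icc a b)
    fun x hx => by rw [hsupp x hx, abs_zero]]
  calc ∫ x in Icc a b, |f x| ≤ ‖∫ x in Icc a b, |f x|‖ := le_abs_self _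
    _ ≤ M * volume.real (Icc a b) :=
        norm_setIntegral_le_of_norm_le_const (by simp) fun x _ => by simpa using hbd x
    _ = (b - a) * M := by rw [Real.volume_real_Icc_of_le hab, mul_comm]

lemma integral_comp_mul_sub {t : ℝ} (ht : 0 < t) (k : ℝ) :
    ∫ x, f (t * x - k) = t⁻¹ * ∫ x, f x := by
  rw [Measure.integral_comp_mul_left (fun y => f (y - k)) t, integral_sub_right_eq_self,
    abs_of_pos (inv_pos.2 ht), smul_eq_mul]

lemma abs_integral_mul_le_of_integral_eq_zero (hh : Integrable h)
    (hsupp : ∀ x ∉ Icc a b, h x = 0) (hmean : ∫ x, h x = 0)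
    (hg : eVariationOn g (Icc a b) ≠ ⊤) :
    |∫ x, g x * h x| ≤ (eVariationOn g (Icc a b)).toReal * ∫ x, |h x| := by
  set D := (eVariationOn g (Icc a b)).toReal
  have hosc : ∀ x, |(g x - g a) * h x| ≤ D * |h x| := by
    intro x
    by_cases hx : x ∈ Icc a b
    · rw [abs_mul]
      gcongr
      rw [← Real.dist_eq, dist_edist]
      exact ENNReal.toReal_mono hg
        (eVariationOn.edist_le g hx (left_mem_Icc.2 (hx.1.trans hx.2)))
    · simp [hsupp x hx]
  by_cases hgh : Integrable fun x => g x * h x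
  · have hcentered : Integrable fun x => (g x - g a) * h x := by
      refine (hgh.sub (hh.const_mul (g a))).congr (.of_forall fun x => ?_)
      simp only [Pi.sub_apply, sub_mul]
    have hshift : ∫ x, g x * h x = ∫ x, (g x - g a) * h x := by
      simp_rw [sub_mul]
      rw [integral_sub hgh (hh.const_mul (g a)), integral_const_mul, hmean, mul_zero, sub_zero]
    calc |∫ x, g x * h x| = |∫ x, (g x - g a) * h x| := by rw [hshift]
      _ ≤ ∫ x, |(g x - g a) * h x| := abs_integral_le_integral_abs
      _ ≤ ∫ x, D * |h x| := integral_mono hcentered.abs (hh.abs.const_mul D) hosc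
      _ = D * ∫ x, |h x| := integral_const_mul D _
  · rw [integral_undef hgh, abs_zero]
    exact mul_nonneg ENNReal.toReal_nonneg (integral_nonneg fun x => abs_nonneg _)

end Integral

lemma abs_integral_mul_dilate_le {ψ g : ℝ → ℝ} {S M t c k : ℝ} (hS : 0 ≤ S)
    (hmeas : Measurable ψ) (hbd : ∀ x, |ψ x| ≤ M) (hsupp : ∀ x ∉ Icc 0 S, ψ x = 0)
    (hmoment : ∫ x, ψ x = 0) (ht : 0 < t) (hc : 0 ≤ c)
    (hg : eVariationOn g (Icc (k / t) ((k + S) / t)) ≠ ⊤) :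
    |∫ x, g x * (c * ψ (t * x - k))|
      ≤ (eVariationOn g (Icc (k / t) ((k + S) / t))).toReal * (c / t * (S * M)) := by
  have hψ : Integrable ψ :=
    integrable_of_abs_le_of_eq_zero_off_Icc hmeas.aestronglyMeasurable hbd hsupp
  have hint : Integrable fun x => c * ψ (t * x - k) :=
    ((hψ.comp_sub_right k).comp_mul_left' ht.ne').const_mul c
  have hsupp' : ∀ x ∉ Icc (k / t) ((k + S) / t), c * ψ (t * x - k) = 0 := by
    intro x hx
    rw [hsupp, mul_zero]
    rintro ⟨hlo, hhi⟩
    exact hx ⟨by rw [div_le_iff₀ ht]; linarith, by rw [le_div_iff₀ ht]; linarith⟩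
  have hmean : ∫ x, c * ψ (t * x - k) = 0 := by
    rw [integral_const_mul, integral_comp_mul_sub ht, hmoment, mul_zero, mul_zero]
  refine (abs_integral_mul_le_of_integral_eq_zero hint hsupp' hmean hg).trans ?_
  gcongr
  calc ∫ x, |c * ψ (t * x - k)| = c / t * ∫ x, |ψ x| := by
        simp_rw [abs_mul, abs_of_nonneg hc]
        rw [integral_const_mul, integral_comp_mul_sub (f := fun y => |ψ y|) ht, div_eq_mul_inv,
          mul_assoc]
    _ ≤ c / t * (S * M) := by
        gcongr
        simpa using integral_abs_le_of_abs_le_of_eq_zero_off_Icc hS hbd hsupp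

lemma tsum_abs_integral_mul_dilate_le {ψ g : ℝ → ℝ} {S M t c : ℝ} (hS : 0 ≤ S)
    (hmeas : Measurable ψ) (hbd : ∀ x, |ψ x| ≤ M) (hsupp : ∀ x ∉ Icc 0 S, ψ x = 0)
    (hmoment : ∫ x, ψ x = 0) (ht : 0 < t) (hc : 0 ≤ c) (hg : eVariationOn g univ ≠ ⊤) :
    ∑' k : ℤ, ENNReal.ofReal |∫ x, g x * (c * ψ (t * x - k))|
      ≤ ENNReal.ofReal (c / t * (S * M)) * (⌈S⌉₊ * eVariationOn g univ) := by
  set N := ⌈S⌉₊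
  let u : ℤ → ℝ := fun m => m / t
  have hu : Monotone u := fun m m' h => div_le_div_of_nonneg_right (by exact_mod_cast h) ht.le
  have hcoef : ∀ k : ℤ, ENNReal.ofReal |∫ x, g x * (c * ψ (t * x - k))|
      ≤ ENNReal.ofReal (c / t * (S * M)) * eVariationOn g (Icc (u k) (u (k + N))) := by
    intro k
    have hsub : Icc (k / t) ((k + S) / t) ⊆ Icc (u k) (u (k + N)) :=
      Icc_subset_Icc le_rfl (by simp only [u]; push_cast; gcongr; exact Nat.le_ceil S)
    have hfin : eVariationOn g (Icc (k / t) ((k + S) / t)) ≠ ⊤ :=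
      ne_top_of_le_ne_top hg (eVariationOn.mono g (subset_univ _))
    calc ENNReal.ofReal |∫ x, g x * (c * ψ (t * x - k))|
        ≤ ENNReal.ofReal ((eVariationOn g (Icc (k / t) ((k + S) / t))).toReal
            * (c / t * (S * M))) :=
          ENNReal.ofReal_le_ofReal
            (abs_integral_mul_dilate_le hS hmeas hbd hsupp hmoment ht hc hfin)
      _ = ENNReal.ofReal (c / t * (S * M)) * eVariationOn g (Icc (k / t) ((k + S) / t)) := by
          rw [ENNReal.ofReal_mul ENNReal.toReal_nonneg, ENNReal.ofReal_toReal hfin, mul_comm]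
      _ ≤ _ := by gcongr; exact eVariationOn.mono g hsub
  calc ∑' k : ℤ, ENNReal.ofReal |∫ x, g x * (c * ψ (t * x - k))|
      ≤ ∑' k : ℤ, ENNReal.ofReal (c / t * (S * M)) * eVariationOn g (Icc (u k) (u (k + N))) :=
        ENNReal.tsum_le_tsum hcoef
    _ ≤ ENNReal.ofReal (c / t * (S * M)) * (N * eVariationOn g univ) := by
        rw [ENNReal.tsum_mul_left]
        gcongr
        exact tsum_eVariationOn_Icc_add_le hu N


theorem bv_wavelet_coefficient_l1_bound_general
    (S M : ℝ) (hS : 1 ≤ S) (hM : 0 < M)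
    (ψ : ℝ → ℝ) (hmeas : Measurable ψ)
    (hbd : ∀ x, |ψ x| ≤ M)
    (hsupp : ∀ x, x ∉ Set.Icc (0 : ℝ) S → ψ x = 0)
    (hmoment : ∫ x, ψ x = 0)
    (g : ℝ → ℝ) (V : ℝ) (hV0 : 0 ≤ V)
    (hgBV : eVariationOn g Set.univ = ENNReal.ofReal V) :
    ∀ j : ℕ,
      ∑' k : ℤ, ENNReal.ofReal
          |∫ x, g x * ((2 : ℝ) ^ ((j : ℝ) / 2) * ψ (2 ^ j * x - k))|
        ≤ ENNReal.ofReal ((S + 1) * S * M * (2 : ℝ) ^ (-(j : ℝ) / 2) * V) := by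
  intro j
  have hscale : (2 : ℝ) ^ ((j : ℝ) / 2) / 2 ^ j = 2 ^ (-(j : ℝ) / 2) := by
    rw [← Real.rpow_natCast, ← Real.rpow_sub two_pos]
    ring_nf
  have hN : (⌈S⌉₊ : ℝ) ≤ S + 1 := (Nat.ceil_lt_add_one (by linarith)).le
  refine (tsum_abs_integral_mul_dilate_le (by linarith) hmeas hbd hsupp hmoment
    (by positivity) (by positivity) (hgBV ▸ ENNReal.ofReal_ne_top)).trans ?_
  rw [hgBV, hscale, ← ENNReal.ofReal_natCast, ← ENNReal.ofReal_mul (by positivity),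
    ← ENNReal.ofReal_mul (by positivity)]
  refine ENNReal.ofReal_le_ofReal ?_
  calc 2 ^ (-(j : ℝ) / 2) * (S * M) * (⌈S⌉₊ * V)
      ≤ 2 ^ (-(j : ℝ) / 2) * (S * M) * ((S + 1) * V) := by gcongr
    _ = (S + 1) * S * M * 2 ^ (-(j : ℝ) / 2) * V := by ring

/-- ℓ¹ wavelet-coefficient bound for `BV` functions in dimension 1 (used in the proof of
Proposition 8 of the paper, reflecting `BV ⊂ B¹_{1,∞}`): if `ψ` is bounded by `M`,
supported in `[0,S]` with vanishing mean, and `g` vanishes outside `[0,1]` and has total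
variation `V` on `ℝ`, then for every scale `j`,
`Σ_{k ∈ ℤ} |∫ g(x) 2^{j/2} ψ(2^j x - k) dx| ≤ (S+1) S M 2^{-j/2} V`. -/
theorem bv_wavelet_coefficient_l1_bound
    (S M : ℝ) (hS : 1 ≤ S) (hM : 0 < M)
    (ψ : ℝ → ℝ) (hmeas : Measurable ψ)
    (hbd : ∀ x, |ψ x| ≤ M)
    (hsupp : ∀ x, x ∉ Set.Icc (0 : ℝ) S → ψ x = 0)
    (hmoment : ∫ x, ψ x = 0)
    (g : ℝ → ℝ) (V : ℝ) (hV0 : 0 ≤ V)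
    (hgsupp : ∀ x, x ∉ Set.Icc (0 : ℝ) 1 → g x = 0)
    (hgBV : eVariationOn g Set.univ = ENNReal.ofReal V) :
    ∀ j : ℕ,
      ∑' k : ℤ, ENNReal.ofReal
          |∫ x, g x * ((2 : ℝ) ^ ((j : ℝ) / 2) * ψ (2 ^ j * x - k))|
        ≤ ENNReal.ofReal ((S + 1) * S * M * (2 : ℝ) ^ (-(j : ℝ) / 2) * V) :=
  bv_wavelet_coefficient_l1_bound_general S M hS hM ψ hmeas hbd hsupp hmoment g V hV0 hgBV
end
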